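/- arXiv:2305.08951 — 3 statements merged into one kernel-verified Lean document; each statement's English description precedes it below -/
import Mathlib

section
/- Let d(s) = exp(s·G_d) be a linear continuous dilation in ℝⁿ and let h : ℝⁿ → ℝ satisfy h(d(s)x) = e^{νs}·h(x) for all x ∈ ℝⁿ and all s ∈ ℝ, for some ν ∈ ℝ. If h is continuous at 0, then either h is a constant function, or ν > 0 and h(0) = 0. -/
open Matrix Filter Topology Set

/-- The linear continuous group `d(s) = exp (s • G)` generated by `G`. -/
noncomputable def dilMat {n : ℕ} (G : Matrix (Fin n) (Fin n) ℝ) (s : ℝ) :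
    Matrix (Fin n) (Fin n) ℝ := NormedSpace.exp (s • G)

/-- `d(s) = exp (s G)` is a dilation: `‖d(s)x‖ → ∞` as `s → ∞` and `‖d(s)x‖ → 0` as
`s → -∞`, for every `x ≠ 0` (this property does not depend on the choice of norm). -/
def IsDilation {n : ℕ} (G : Matrix (Fin n) (Fin n) ℝ) : Prop :=
  ∀ x : Fin n → ℝ, x ≠ 0 →
    Tendsto (fun s : ℝ => ‖dilMat G s *ᵥ x‖) atTop atTop ∧
    Tendsto (fun s : ℝ => ‖dilMat G s *ᵥ x‖) atBot (𝓝 0)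

/-!
If `h (d s x) = e^{ν s} h x`, then evaluating at the fixed point `0` of the dilation gives
`h 0 = e^{ν s} h 0`, so `h 0 = 0` unless `ν = 0`. For `ν ≤ 0`, write `h x = e^{-ν s} h (d s x)`
and let `s → -∞`: `d s x → 0`, so by continuity at `0` the right-hand side tends to `h 0`
(for `ν = 0`) or to `0 = h 0` (for `ν < 0`); hence `h` is constantly `h 0`.
-/

namespace Homogeneity

variable {X : Type*} {d : ℝ → X → X} {ν : ℝ} {h : X → ℝ}

def IsHomogeneous (d : ℝ → X → X) (ν : ℝ) (h : X → ℝ) : Prop :=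
  ∀ (s : ℝ) (x : X), h (d s x) = Real.exp (ν * s) * h x

theorem IsHomogeneous.apply_eq_exp_neg_mul (hh : IsHomogeneous d ν h) (s : ℝ) (x : X) :
    h x = Real.exp (-ν * s) * h (d s x) := by
  rw [hh, ← mul_assoc, ← Real.exp_add, neg_mul, neg_add_cancel, Real.exp_zero, one_mul]

theorem IsHomogeneous.apply_fixedPoint_eq_zero {x₀ : X} (hh : IsHomogeneous d ν h)
    (hfix : ∀ s, d s x₀ = x₀) (hν : ν ≠ 0) : h x₀ = 0 := by
  have hexp : Real.exp (ν * 1) ≠ 1 := by simpa [Real.exp_eq_one_iff] using hν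
  have h1 : Real.exp (ν * 1) * h x₀ = 1 * h x₀ := by rw [← hh, hfix, one_mul]
  by_contra hne
  exact hexp (mul_right_cancel₀ hne h1)

theorem IsHomogeneous.apply_eq_of_nonpos [TopologicalSpace X] {x₀ x : X}
    (hh : IsHomogeneous d ν h) (hfix : ∀ s, d s x₀ = x₀) (hcont : ContinuousAt h x₀)
    (hlim : Tendsto (d · x) atBot (𝓝 x₀)) (hν : ν ≤ 0) : h x = h x₀ := by
  have hlimh : Tendsto (fun s => h (d s x)) atBot (𝓝 (h x₀)) := hcont.tendsto.comp hlim
  rcases hν.lt_or_eq with hneg | rfl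
  · have hexp : Tendsto (fun s => Real.exp (-ν * s)) atBot (𝓝 0) :=
      Real.tendsto_exp_atBot.comp (tendsto_id.const_mul_atBot (neg_pos.mpr hneg))
    have hprod := hexp.mul hlimh
    simp only [← hh.apply_eq_exp_neg_mul, zero_mul] at hprod
    rw [tendsto_const_nhds_iff.mp hprod, hh.apply_fixedPoint_eq_zero hfix hneg.ne]
  · simp only [(hh · x), zero_mul, Real.exp_zero, one_mul] at hlimh
    exact tendsto_const_nhds_iff.mp hlimh

end Homogeneity

theorem IsDilation.tendsto_dilMat_mulVec_atBot {n : ℕ} {G : Matrix (Fin n) (Fin n) ℝ}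
    (hG : IsDilation G) (x : Fin n → ℝ) :
    Tendsto (fun s => dilMat G s *ᵥ x) atBot (𝓝 0) := by
  rcases eq_or_ne x 0 with rfl | hx
  · simpa only [mulVec_zero] using tendsto_const_nhds
  · exact tendsto_zero_iff_norm_tendsto_zero.mpr (hG x hx).2

/-- if a `d`-homogeneous function of degree `ν` is continuous at `0`, then
either it is constant, or `ν > 0` and `h 0 = 0`. -/
theorem stmt2 {n : ℕ} (G : Matrix (Fin n) (Fin n) ℝ) (hdil : IsDilation G)
    (h : (Fin n → ℝ) → ℝ) (ν : ℝ)
    (hhom : ∀ (s : ℝ) (x : Fin n → ℝ), h (dilMat G s *ᵥ x) = Real.exp (ν * s) * h x)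
    (hcont : ContinuousAt h 0) :
    (∃ c : ℝ, ∀ x : Fin n → ℝ, h x = c) ∨ (0 < ν ∧ h 0 = 0) := by
  have hh : Homogeneity.IsHomogeneous (fun s x => dilMat G s *ᵥ x) ν h := hhom
  have hfix : ∀ s, dilMat G s *ᵥ 0 = 0 := fun s => mulVec_zero _
  rcases le_or_gt ν 0 with hν | hν
  · exact Or.inl ⟨h 0, fun x =>
      hh.apply_eq_of_nonpos hfix hcont (hdil.tendsto_dilMat_mulVec_atBot x) hν⟩
  · exact Or.inr ⟨hν, hh.apply_fixedPoint_eq_zero hfix hν.ne'⟩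
end

section
/- Let d(s) = exp(s·G_d) be a linear continuous dilation in ℝⁿ and let g : ℝⁿ → ℝⁿ be continuous and d-homogeneous of degree μ ≤ 0. Then the system ẋ = g(x) is forward complete: for every initial condition x(t₀) = x₀ ∈ ℝⁿ, every maximal solution of ẋ = g(x) is defined for all t ≥ t₀ (equivalently, no solution blows up in finite forward time). -/
open Matrix Filter Topology Set

/-!
If `‖x a‖ ≤ r`, choose `s ≤ 0` with `d(s)` mapping the ball of radius `r` into the unit ball.
By homogeneity `t ↦ d(s) x(e^{μ s} t)` is again a solution; it starts in the unit ball, and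
a crude speed bound `L` for `g` on the ball of radius 2 keeps it inside that ball for a time
`1 / L` which does not depend on `r`. Since `μ ≤ 0` we have `e^{μ s} ≥ 1`, so the window
`[a, a + 1 / L]` of `x` corresponds to a shorter one of the rescaled solution, and `‖x‖` stays
below `2 ‖d(-s)‖` there. Covering `[t₀, T)` by finitely many such windows bounds `x` on all of it.
-/

theorem Matrix.norm_mulVec_le_sum_norm_col {𝕜 m n : Type*} [NormedField 𝕜] [Fintype m]
    [Fintype n] (M : Matrix m n 𝕜) (v : n → 𝕜) : ‖M *ᵥ v‖ ≤ (∑ j, ‖M.col j‖) * ‖v‖ := by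
  rw [mulVec_eq_sum, Finset.sum_mul]
  refine (norm_sum_le _ _).trans (Finset.sum_le_sum fun j _ => ?_)
  rw [norm_smul, MulOpposite.norm_op, mul_comm]
  exact mul_le_mul_of_nonneg_left (norm_le_pi_norm v j) (norm_nonneg _)

theorem norm_le_add_mul_of_hasDerivAt {E : Type*} [NormedAddCommGroup E] [NormedSpace ℝ E]
    {g : E → E} {y : ℝ → E} {a b L R : ℝ} (hL : 0 ≤ L) (hg : ∀ z, ‖z‖ ≤ R → ‖g z‖ < L)
    (hy : ∀ t ∈ Icc a b, HasDerivAt y (g (y t)) t) (hR : ‖y a‖ + L * (b - a) ≤ R) :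
    ∀ t ∈ Icc a b, ‖y t‖ ≤ ‖y a‖ + L * (t - a) := by
  refine image_norm_le_of_norm_deriv_right_lt_deriv_boundary
    (fun t ht => (hy t ht).continuousAt.continuousWithinAt)
    (fun t ht => (hy t (Ico_subset_Icc_self ht)).hasDerivWithinAt) (by simp)
    (fun t => ((hasDerivAt_id t).sub_const a |>.const_mul L).const_add _) ?_
  intro t ht hyt
  simp only [mul_one]
  refine hg _ (hyt.le.trans ?_)
  nlinarith [ht.2]

def BoundsPropagate (φ : ℝ → ℝ) (t₀ T δ : ℝ) : Prop :=
  ∀ r, ∃ R, ∀ a u, t₀ ≤ a → a ≤ u → u ≤ a + δ → u < T → φ a ≤ r → φ u ≤ R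

theorem BoundsPropagate.exists_bound {φ : ℝ → ℝ} {t₀ T δ : ℝ} (hstep : BoundsPropagate φ t₀ T δ)
    (hδ : 0 < δ) : ∃ C, ∀ t ∈ Ico t₀ T, φ t ≤ C := by
  choose F hF using hstep
  have hiter : ∀ j : ℕ, ∀ u ∈ Ico t₀ T, u ≤ t₀ + j * δ → φ u ≤ F^[j] (φ t₀) := by
    intro j
    induction j with
    | zero =>
      intro u hu hut
      rw [le_antisymm (by simpa using hut) hu.1]
      rfl
    | succ j ih =>
      intro u hu hut
      rw [Function.iterate_succ_apply']
      have hjδ : 0 ≤ (j : ℝ) * δ := by positivity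
      refine hF _ (max t₀ (u - δ)) u (le_max_left _ _) (max_le hu.1 (by linarith))
        (by linarith [le_max_right t₀ (u - δ)]) hu.2 (ih _ ⟨le_max_left _ _, ?_⟩ ?_)
      · exact (max_le hu.1 (by linarith)).trans_lt hu.2
      · push_cast at hut
        exact max_le (by linarith) (by linarith)
  refine ⟨F^[⌈(T - t₀) / δ⌉₊] (φ t₀), fun u hu => hiter _ u hu ?_⟩
  have := (div_le_iff₀ hδ).1 (Nat.le_ceil ((T - t₀) / δ))
  linarith [hu.2]

section Dilation

variable {n : ℕ} (G : Matrix (Fin n) (Fin n) ℝ)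

theorem dilMat_mul (s t : ℝ) : dilMat G s * dilMat G t = dilMat G (s + t) := by
  rw [dilMat, dilMat, dilMat, add_smul,
    Matrix.exp_add_of_commute _ _ (((Commute.refl G).smul_left s).smul_right t)]

theorem dilMat_neg_mulVec_dilMat_mulVec (s : ℝ) (v : Fin n → ℝ) :
    dilMat G (-s) *ᵥ (dilMat G s *ᵥ v) = v := by
  rw [mulVec_mulVec, dilMat_mul, neg_add_cancel, dilMat, zero_smul, NormedSpace.exp_zero,
    one_mulVec]

theorem IsDilation.eventually_norm_mulVec_le (hdil : IsDilation G) (r : ℝ) :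
    ∀ᶠ s in atBot, ∀ v : Fin n → ℝ, ‖v‖ ≤ r → ‖dilMat G s *ᵥ v‖ ≤ 1 := by
  have hcol : Tendsto (fun s => (∑ j, ‖(dilMat G s).col j‖) * r) atBot (𝓝 0) := by
    rw [← zero_mul r, ← Finset.sum_const_zero (s := Finset.univ (α := Fin n))]
    refine (tendsto_finsetSum _ fun j _ => ?_).mul_const r
    simp only [← mulVec_single_one]
    exact (hdil _ (Pi.single_ne_zero_iff.2 one_ne_zero)).2
  filter_upwards [hcol.eventually (eventually_le_nhds one_pos)] with s hs v hv
  exact (norm_mulVec_le_sum_norm_col _ v).trans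
    ((mul_le_mul_of_nonneg_left hv (by positivity)).trans hs)

variable {g : (Fin n → ℝ) → Fin n → ℝ} {μ : ℝ}

theorem hasDerivAt_dilMat_mulVec_comp_mul
    (ghom : ∀ s x, g (dilMat G s *ᵥ x) = Real.exp (μ * s) • (dilMat G s *ᵥ g x))
    {x : ℝ → Fin n → ℝ} (s t : ℝ)
    (hx : HasDerivAt x (g (x (Real.exp (μ * s) * t))) (Real.exp (μ * s) * t)) :
    HasDerivAt (fun t => dilMat G s *ᵥ x (Real.exp (μ * s) * t))
      (g (dilMat G s *ᵥ x (Real.exp (μ * s) * t))) t := by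
  have hxc := hx.scomp t ((hasDerivAt_id t).const_mul (Real.exp (μ * s)))
  rw [mul_one] at hxc
  have := (mulVecLin (dilMat G s)).toContinuousLinearMap.hasFDerivAt.comp_hasDerivAt t hxc
  simpa [ghom, mulVec_smul, Function.comp_def] using this

theorem IsDilation.boundsPropagate_norm (hdil : IsDilation G) (hμ : μ ≤ 0)
    (ghom : ∀ s x, g (dilMat G s *ᵥ x) = Real.exp (μ * s) • (dilMat G s *ᵥ g x))
    {L : ℝ} (hL : 0 < L) (hgL : ∀ z, ‖z‖ ≤ 2 → ‖g z‖ < L)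
    {x : ℝ → Fin n → ℝ} {t₀ T : ℝ} (hx : ∀ t ∈ Ico t₀ T, HasDerivAt x (g (x t)) t) :
    BoundsPropagate (fun t => ‖x t‖) t₀ T (1 / L) := by
  intro r
  obtain ⟨s, hs, hs0⟩ :=
    ((hdil.eventually_norm_mulVec_le G r).and (eventually_le_atBot 0)).exists
  set c := Real.exp (μ * s)
  have hc : 1 ≤ c := Real.one_le_exp (mul_nonneg_of_nonpos_of_nonpos hμ hs0)
  have hc0 : 0 < c := one_pos.trans_le hc
  refine ⟨(∑ j, ‖(dilMat G (-s)).col j‖) * 2, fun a u hta hau huδ huT hxa => ?_⟩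
  set y : ℝ → Fin n → ℝ := fun t => dilMat G s *ᵥ x (c * t)
  have hcancel : ∀ t, c * (t / c) = t := fun t => mul_div_cancel₀ t hc0.ne'
  have hy : ∀ t ∈ Icc (a / c) (u / c), HasDerivAt y (g (y t)) t := by
    intro t ht
    refine hasDerivAt_dilMat_mulVec_comp_mul G ghom s t (hx _ ⟨?_, ?_⟩)
    · have := mul_le_mul_of_nonneg_left ht.1 hc0.le
      rw [hcancel] at this
      linarith
    · have := mul_le_mul_of_nonneg_left ht.2 hc0.le
      rw [hcancel] at this
      linarith
  have hya : ‖y (a / c)‖ ≤ 1 := by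
    simp only [y, hcancel]
    exact hs _ hxa
  have hlen : L * (u / c - a / c) ≤ 1 := by
    have : u / c - a / c ≤ u - a := by
      rw [← sub_div]
      exact div_le_self (by linarith) hc
    have := mul_le_mul_of_nonneg_left (this.trans (show u - a ≤ 1 / L by linarith)) hL.le
    rwa [mul_one_div_cancel hL.ne'] at this
  have hyu : ‖y (u / c)‖ ≤ 2 :=
    (norm_le_add_mul_of_hasDerivAt hL.le hgL hy (by linarith) (u / c)
      ⟨div_le_div_of_nonneg_right hau hc0.le, le_rfl⟩).trans (by linarith)
  have hxu : x u = dilMat G (-s) *ᵥ y (u / c) := by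
    simp only [y, hcancel, dilMat_neg_mulVec_dilMat_mulVec]
  show ‖x u‖ ≤ _
  rw [hxu]
  exact (norm_mulVec_le_sum_norm_col _ _).trans
    (mul_le_mul_of_nonneg_left hyu (by positivity))

end Dilation

/-- a continuous `d`-homogeneous vector field of degree `μ ≤ 0` generates a
forward complete system: no solution of `ẋ = g(x)` blows up in finite forward time, i.e.
every solution defined on a bounded forward interval `[t₀, T)` is bounded there. -/
theorem stmt4 {n : ℕ} (G : Matrix (Fin n) (Fin n) ℝ) (hdil : IsDilation G)
    (g : (Fin n → ℝ) → (Fin n → ℝ)) (μ : ℝ) (hμ : μ ≤ 0) (hg : Continuous g)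
    (ghom : ∀ (s : ℝ) (x : Fin n → ℝ),
      g (dilMat G s *ᵥ x) = Real.exp (μ * s) • (dilMat G s *ᵥ g x)) :
    ∀ (t₀ T : ℝ), t₀ < T → ∀ x : ℝ → (Fin n → ℝ),
      (∀ t ∈ Set.Ico t₀ T, HasDerivAt x (g (x t)) t) →
      ∃ C : ℝ, ∀ t ∈ Set.Ico t₀ T, ‖x t‖ ≤ C := by
  intro t₀ T _ x hx
  obtain ⟨C, hC⟩ :=
    (isCompact_closedBall (0 : Fin n → ℝ) 2).exists_bound_of_continuousOn hg.continuousOn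
  have hC0 : 0 ≤ C := (norm_nonneg _).trans (hC 0 (Metric.mem_closedBall_self zero_le_two))
  have hgL : ∀ z : Fin n → ℝ, ‖z‖ ≤ 2 → ‖g z‖ < C + 1 := fun z hz =>
    (hC z (mem_closedBall_zero_iff.2 hz)).trans_lt (lt_add_one C)
  exact (hdil.boundsPropagate_norm G hμ ghom (by linarith) hgL hx).exists_bound
    (one_div_pos.2 (by linarith))
end

section
/- Let d(s) = exp(s·G_d) be a linear continuous dilation in ℝⁿ and let Ω ⊆ ℝⁿ be a closed d-homogeneous cone, i.e., d(s)Ω ⊆ Ω for all s ∈ ℝ. Let C_Ω(x) denote the Bouligand tangent cone to Ω at x. Then C_Ω(d(s)x) = d(s)·C_Ω(x) for all x ∈ Ω and all s ∈ ℝ. -/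
/-!
A linear map `A` with `A Ω ⊆ Ω` is `‖A‖`-Lipschitz, so `dist (A w, Ω) ≤ ‖A‖ dist (w, Ω)`: the
quotients `dist (A x + h A z, Ω) / h` are dominated by `‖A‖` times those at `x` in direction `z`,
hence `A` maps `C_Ω(x)` into `C_Ω(A x)`. Applied to `d(s)` and to `d(-s) = d(s)⁻¹` this gives
both inclusions.
-/

open Matrix Filter Topology Set

/-- The Bouligand tangent cone to `Ω` at `x`:
`C_Ω(x) = { z : liminf_{h→0⁺} (inf_{y∈Ω} ‖x + hz − y‖)/h = 0 }`
(this set does not depend on the choice of the norm). -/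
noncomputable def bouligand {n : ℕ} (Ω : Set (Fin n → ℝ)) (x : Fin n → ℝ) :
    Set (Fin n → ℝ) :=
  {z | Filter.liminf (fun h : ℝ => Metric.infDist (x + h • z) Ω / h) (𝓝[>] 0) = 0}

open Metric

lemma dilMat_zero {n : ℕ} (G : Matrix (Fin n) (Fin n) ℝ) : dilMat G 0 = 1 := by
  rw [dilMat, zero_smul, NormedSpace.exp_zero]

lemma dilMat_add {n : ℕ} (G : Matrix (Fin n) (Fin n) ℝ) (s t : ℝ) :
    dilMat G (s + t) = dilMat G s * dilMat G t := by
  rw [dilMat, dilMat, dilMat, add_smul,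
    Matrix.exp_add_of_commute _ _ (((Commute.refl G).smul_left s).smul_right t)]

lemma dilMat_mulVec_dilMat_neg_mulVec {n : ℕ} (G : Matrix (Fin n) (Fin n) ℝ) (s : ℝ)
    (w : Fin n → ℝ) : dilMat G s *ᵥ (dilMat G (-s) *ᵥ w) = w := by
  rw [mulVec_mulVec, ← dilMat_add, add_neg_cancel, dilMat_zero, one_mulVec]

lemma LipschitzWith.infDist_image_le {α β : Type*} [PseudoMetricSpace α] [PseudoMetricSpace β]
    {K : NNReal} {f : α → β} (hf : LipschitzWith K f) (x : α) (s : Set α) :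
    infDist (f x) (f '' s) ≤ K * infDist x s := by
  rcases s.eq_empty_or_nonempty with rfl | hs
  · simp
  have : Nonempty s := hs.to_subtype
  rw [infDist_eq_iInf (x := x), Real.mul_iInf_of_nonneg K.coe_nonneg]
  exact le_ciInf fun y =>
    (infDist_le_dist_of_mem (mem_image_of_mem f y.2)).trans (hf.dist_le_mul x y)

/-- The upper bound `C` matters: on `ℝ`, `liminf` of a function unbounded above is the junk
value `0`. -/
lemma Filter.liminf_eq_zero_of_le_const_mul {α : Type*} {l : Filter α} [l.NeBot] {f g : α → ℝ}
    {K C : ℝ} (hK : 0 ≤ K) (hg : ∀ᶠ a in l, 0 ≤ g a) (hgf : ∀ᶠ a in l, g a ≤ K * f a)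
    (hfC : ∀ᶠ a in l, f a ≤ C) (hf : liminf f l = 0) : liminf g l = 0 := by
  have hgC : ∀ᶠ a in l, g a ≤ K * C := by
    filter_upwards [hgf, hfC] with a h1 h2
    exact h1.trans (mul_le_mul_of_nonneg_left h2 hK)
  refine le_antisymm (le_of_forall_pos_le_add fun ε hε => ?_)
    (le_liminf_of_le (isCoboundedUnder_ge_of_eventually_le l hgC) hg)
  have hsmall : ∃ᶠ a in l, f a < ε / (K + 1) :=
    frequently_lt_of_liminf_lt (isCoboundedUnder_ge_of_eventually_le l hfC)
      (by rw [hf]; positivity)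
  refine liminf_le_of_frequently_le ?_ (isBoundedUnder_of_eventually_ge hg)
  refine (hsmall.and_eventually hgf).mono fun a ⟨hfa, hga⟩ => ?_
  have : K * f a ≤ K * (ε / (K + 1)) := mul_le_mul_of_nonneg_left hfa.le hK
  have : K * (ε / (K + 1)) ≤ ε := by
    rw [mul_div_assoc', div_le_iff₀ (by positivity)]; nlinarith
  linarith

lemma infDist_add_smul_div_le {n : ℕ} {Ω : Set (Fin n → ℝ)} {x : Fin n → ℝ} (hx : x ∈ Ω)
    (z : Fin n → ℝ) {h : ℝ} (hh : 0 < h) : infDist (x + h • z) Ω / h ≤ ‖z‖ := by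
  rw [div_le_iff₀ hh]
  calc infDist (x + h • z) Ω ≤ dist (x + h • z) x := infDist_le_dist_of_mem hx
    _ = ‖z‖ * h := by rw [dist_eq_norm, add_sub_cancel_left, norm_smul, Real.norm_of_nonneg hh.le,
        mul_comm]

lemma map_mem_bouligand_of_mapsTo {n : ℕ} {Ω : Set (Fin n → ℝ)} (f : (Fin n → ℝ) →L[ℝ] (Fin n → ℝ))
    (hf : MapsTo f Ω Ω) {x z : Fin n → ℝ} (hx : x ∈ Ω) (hz : z ∈ bouligand Ω x) :
    f z ∈ bouligand Ω (f x) := by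
  have hdist : ∀ w, infDist (f w) Ω ≤ ‖f‖ * infDist w Ω := fun w =>
    (infDist_le_infDist_of_subset hf.image_subset (Nonempty.image f ⟨x, hx⟩)).trans
      (f.lipschitz.infDist_image_le w Ω)
  refine liminf_eq_zero_of_le_const_mul (C := ‖z‖) (norm_nonneg f) ?_ ?_ ?_ hz
  · filter_upwards [self_mem_nhdsWithin] with h (hh : 0 < h)
    exact div_nonneg infDist_nonneg hh.le
  · filter_upwards [self_mem_nhdsWithin] with h (hh : 0 < h)
    rw [← map_smul, ← map_add, ← mul_div_assoc]
    exact div_le_div_of_nonneg_right (hdist _) hh.le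
  · filter_upwards [self_mem_nhdsWithin] with h hh
    exact infDist_add_smul_div_le hx z hh

theorem stmt6_general {n : ℕ} (G : Matrix (Fin n) (Fin n) ℝ)
    (Ω : Set (Fin n → ℝ))
    (hcone : ∀ s : ℝ, (fun x => dilMat G s *ᵥ x) '' Ω ⊆ Ω) :
    ∀ x ∈ Ω, ∀ s : ℝ,
      bouligand Ω (dilMat G s *ᵥ x) = (fun z => dilMat G s *ᵥ z) '' bouligand Ω x := by
  intro x hx s
  let d : ℝ → (Fin n → ℝ) →L[ℝ] (Fin n → ℝ) := fun t =>
    LinearMap.toContinuousLinearMap (mulVecLin (dilMat G t))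
  have hd : ∀ t, MapsTo (d t) Ω Ω := fun t y hy => hcone t ⟨y, hy, rfl⟩
  refine Subset.antisymm (fun w hw => ⟨dilMat G (-s) *ᵥ w, ?_, ?_⟩) ?_
  · have hx' : dilMat G (-s) *ᵥ (dilMat G s *ᵥ x) = x := by
      simpa using dilMat_mulVec_dilMat_neg_mulVec G (-s) x
    rw [← hx']
    exact map_mem_bouligand_of_mapsTo (d (-s)) (hd (-s)) (hd s hx) hw
  · exact dilMat_mulVec_dilMat_neg_mulVec G s w
  · rintro _ ⟨z, hz, rfl⟩
    exact map_mem_bouligand_of_mapsTo (d s) (hd s) hx hz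

/-- for a closed `d`-homogeneous cone `Ω`, the Bouligand tangent cone is
`d`-homogeneous: `C_Ω(d(s)x) = d(s)·C_Ω(x)` for all `x ∈ Ω` and all `s`. -/
theorem stmt6 {n : ℕ} (G : Matrix (Fin n) (Fin n) ℝ) (hdil : IsDilation G)
    (Ω : Set (Fin n → ℝ)) (hclosed : IsClosed Ω)
    (hcone : ∀ s : ℝ, (fun x => dilMat G s *ᵥ x) '' Ω ⊆ Ω) :
    ∀ x ∈ Ω, ∀ s : ℝ,
      bouligand Ω (dilMat G s *ᵥ x) = (fun z => dilMat G s *ᵥ z) '' bouligand Ω x :=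
  stmt6_general G Ω hcone
end
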